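/- (Eckart–Young for higher-order ⋆M-product: error formula.) Let M₃,…,M_p be invertible with each M_k = c_k W_k, c_k ≠ 0 and W_k orthogonal, let A ∈ ℝ^{n₁×n₂×⋯×n_p} have t-SVDM A = U ⋆M S ⋆M Vᵀ with t-rank r, and for k ≤ min(n₁,n₂) let A_k = U_k ⋆M S_k ⋆M V_kᵀ be the t-rank-k truncation. Then ‖A − A_k‖_F² = Σ_{i=k+1}^{r} ‖s_i‖_F², where s_i = S(i,i,:,…,:) is the (i,i)-singular tube of S. -/

import Mathlib

open Matrix

/-!
Order-`p` real tensors (`p = q + 2`) are represented as families of frontal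
slices: a tensor `A ∈ ℝ^{n₁ × n₂ × n₃ × ⋯ × n_p}` is a function
`A : TI m → Matrix (Fin n₁) (Fin n₂) ℝ`, where `TI m = ∀ k : Fin q, Fin (m k)`
is the trailing multi-index `(i₃, …, i_p)` and `A i` is the frontal slice
`A(:,:,i₃,…,i_p)`.
-/

namespace TSVDM

variable {q : ℕ} {m : Fin q → ℕ}

/-- Trailing multi-index `(i₃, …, i_p)`. -/
abbrev TI (m : Fin q → ℕ) : Type := ∀ k, Fin (m k)

/-- Transform-domain tensor `Â = A ×₃ M₃ ×₄ M₄ ⋯ ×_p M_p`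
(mode-`k` products along all trailing modes). -/
noncomputable def hat (M : ∀ k, Matrix (Fin (m k)) (Fin (m k)) ℝ) {a b : Type}
    (A : TI m → Matrix a b ℝ) : TI m → Matrix a b ℝ :=
  fun i => ∑ j : TI m, (∏ k, M k (i k) (j k)) • A j

/-- Inverse transform `×₃ M₃⁻¹ ×₄ M₄⁻¹ ⋯ ×_p M_p⁻¹`. -/
noncomputable def unhat (M : ∀ k, Matrix (Fin (m k)) (Fin (m k)) ℝ) {a b : Type}
    (A : TI m → Matrix a b ℝ) : TI m → Matrix a b ℝ :=
  fun i => ∑ j : TI m, (∏ k, (M k)⁻¹ (i k) (j k)) • A j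

/-- The `⋆M`-product: `A ⋆M B = (Â △ B̂) ×₃ M₃⁻¹ ⋯ ×_p M_p⁻¹`, where `△` is the
facewise product (slice-wise matrix multiplication). -/
noncomputable def starM (M : ∀ k, Matrix (Fin (m k)) (Fin (m k)) ℝ)
    {a b c : Type} [Fintype b]
    (A : TI m → Matrix a b ℝ) (B : TI m → Matrix b c ℝ) : TI m → Matrix a c ℝ :=
  unhat M (fun i => hat M A i * hat M B i)

/-- The `⋆M`-transpose: transpose every transform-domain frontal slice. -/
noncomputable def transM (M : ∀ k, Matrix (Fin (m k)) (Fin (m k)) ℝ) {a b : Type}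
    (A : TI m → Matrix a b ℝ) : TI m → Matrix b a ℝ :=
  unhat M (fun i => (hat M A i)ᵀ)

/-- The `⋆M`-identity: all transform-domain frontal slices equal the identity matrix. -/
noncomputable def idM (M : ∀ k, Matrix (Fin (m k)) (Fin (m k)) ℝ)
    (a : Type) [DecidableEq a] : TI m → Matrix a a ℝ :=
  unhat M (fun _ => (1 : Matrix a a ℝ))

/-- `Q` is `⋆M`-orthogonal if `Qᵀ ⋆M Q = Q ⋆M Qᵀ = I`. -/
def IsStarMOrthogonal (M : ∀ k, Matrix (Fin (m k)) (Fin (m k)) ℝ)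
    {a : Type} [Fintype a] [DecidableEq a] (Q : TI m → Matrix a a ℝ) : Prop :=
  starM M (transM M Q) Q = idM M a ∧ starM M Q (transM M Q) = idM M a

/-- Frobenius norm of a tensor. -/
noncomputable def frob {a b : Type} [Fintype a] [Fintype b]
    (A : TI m → Matrix a b ℝ) : ℝ :=
  Real.sqrt (∑ i : TI m, ∑ r : a, ∑ c : b, A i r c ^ 2)

/-- Diagonal position `(j, j)`: row index. -/
def dIdx₁ {n₁ n₂ : ℕ} (j : Fin (min n₁ n₂)) : Fin n₁ :=
  ⟨j.1, lt_of_lt_of_le j.2 (Nat.min_le_left n₁ n₂)⟩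

/-- Diagonal position `(j, j)`: column index. -/
def dIdx₂ {n₁ n₂ : ℕ} (j : Fin (min n₁ n₂)) : Fin n₂ :=
  ⟨j.1, lt_of_lt_of_le j.2 (Nat.min_le_right n₁ n₂)⟩

/-- `A = U ⋆M S ⋆M Vᵀ` is a t-SVDM of `A`: `U`, `V` are `⋆M`-orthogonal, `S` is
f-diagonal (each transform-domain frontal slice is diagonal), and the diagonal
entries of each frontal slice of `Ŝ` are nonnegative and in descending order. -/
structure IsTSVDM (M : ∀ k, Matrix (Fin (m k)) (Fin (m k)) ℝ) {n₁ n₂ : ℕ}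
    (A : TI m → Matrix (Fin n₁) (Fin n₂) ℝ)
    (U : TI m → Matrix (Fin n₁) (Fin n₁) ℝ)
    (S : TI m → Matrix (Fin n₁) (Fin n₂) ℝ)
    (V : TI m → Matrix (Fin n₂) (Fin n₂) ℝ) : Prop where
  decomp : A = starM M (starM M U S) (transM M V)
  orthU : IsStarMOrthogonal M U
  orthV : IsStarMOrthogonal M V
  fdiag : ∀ (i : TI m) (a : Fin n₁) (b : Fin n₂), (a : ℕ) ≠ (b : ℕ) → hat M S i a b = 0
  nonneg : ∀ (i : TI m) (j : Fin (min n₁ n₂)), 0 ≤ hat M S i (dIdx₁ j) (dIdx₂ j)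
  descend : ∀ (i : TI m) (j j' : Fin (min n₁ n₂)), j ≤ j' →
    hat M S i (dIdx₁ j') (dIdx₂ j') ≤ hat M S i (dIdx₁ j) (dIdx₂ j)

/-- The `(j,j)`-singular tube of `S`, as a function of the trailing multi-index. -/
def tube {n₁ n₂ : ℕ} (S : TI m → Matrix (Fin n₁) (Fin n₂) ℝ)
    (j : Fin (min n₁ n₂)) : TI m → ℝ :=
  fun i => S i (dIdx₁ j) (dIdx₂ j)

/-- Frobenius norm of the `(j,j)`-singular tube of `S`. -/
noncomputable def tubeNorm {n₁ n₂ : ℕ} (S : TI m → Matrix (Fin n₁) (Fin n₂) ℝ)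
    (j : Fin (min n₁ n₂)) : ℝ :=
  Real.sqrt (∑ i : TI m, tube S j i ^ 2)

/-- `r` is the t-rank: the number of nonzero singular tubes (tubes `s₁,…,s_r`
are nonzero and the remaining ones vanish). -/
def HasTRank {n₁ n₂ : ℕ} (S : TI m → Matrix (Fin n₁) (Fin n₂) ℝ) (r : ℕ) : Prop :=
  ∀ j : Fin (min n₁ n₂), ((j : ℕ) < r ↔ tube S j ≠ 0)

/-- Keep only the first `k` lateral slices (columns of each frontal slice). -/
def truncCols {n k : ℕ} (hk : k ≤ n) {a : Type}
    (U : TI m → Matrix a (Fin n) ℝ) : TI m → Matrix a (Fin k) ℝ :=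
  fun i => Matrix.of fun r c => U i r (Fin.castLE hk c)

/-- Keep only the leading `k × k` block of each frontal slice. -/
def truncBlock {n₁ n₂ k : ℕ} (h₁ : k ≤ n₁) (h₂ : k ≤ n₂)
    (S : TI m → Matrix (Fin n₁) (Fin n₂) ℝ) : TI m → Matrix (Fin k) (Fin k) ℝ :=
  fun i => Matrix.of fun a b => S i (Fin.castLE h₁ a) (Fin.castLE h₂ b)

/-- The t-rank-`k` truncation `A_k = U_k ⋆M S_k ⋆M V_kᵀ`. -/
noncomputable def truncApprox (M : ∀ k, Matrix (Fin (m k)) (Fin (m k)) ℝ)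
    {n₁ n₂ : ℕ} (U : TI m → Matrix (Fin n₁) (Fin n₁) ℝ)
    (S : TI m → Matrix (Fin n₁) (Fin n₂) ℝ)
    (V : TI m → Matrix (Fin n₂) (Fin n₂) ℝ) (k : ℕ) (hk : k ≤ min n₁ n₂) :
    TI m → Matrix (Fin n₁) (Fin n₂) ℝ :=
  starM M
    (starM M (truncCols (le_trans hk (Nat.min_le_left _ _)) U)
      (truncBlock (le_trans hk (Nat.min_le_left _ _)) (le_trans hk (Nat.min_le_right _ _)) S))
    (transM M (truncCols (le_trans hk (Nat.min_le_right _ _)) V))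

/-- The `j`-th lateral slice `A(:,j,:,…,:)`, as an `n₁ × 1 × n₃ × ⋯ × n_p` tensor. -/
def lateral {n₁ n₂ : ℕ} (A : TI m → Matrix (Fin n₁) (Fin n₂) ℝ) (j : Fin n₂) :
    TI m → Matrix (Fin n₁) (Fin 1) ℝ :=
  fun i => Matrix.of fun r _ => A i r j

/-- The `(j,j)`-singular tube of `S` regarded as a `1 × 1 × n₃ × ⋯ × n_p` tensor. -/
def tubeT {n₁ n₂ : ℕ} (S : TI m → Matrix (Fin n₁) (Fin n₂) ℝ)
    (j : Fin (min n₁ n₂)) : TI m → Matrix (Fin 1) (Fin 1) ℝ :=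
  fun i => Matrix.of fun _ _ => S i (dIdx₁ j) (dIdx₂ j)

/-! In the transform domain the `⋆M`-product is facewise, so every frontal slice of the
transformed error `Â - Â_k` is `Û (Ŝ - Ŝ_k) V̂ᵀ`, where `Ŝ_k` keeps the leading `k × k` block
of `Ŝ`. The orthogonal slices of `Û` and `V̂` preserve the Frobenius norm, and since every `M_k`
is a scalar multiple of an orthogonal matrix, the transform multiplies the squared Frobenius norm
of every tensor by the same factor `∏ c_k²`. Hence `‖A - A_k‖_F = ‖S - S_k‖_F`. Finally `S` is
f-diagonal in the spatial domain as well (its off-diagonal tubes are inverse transforms of zero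
tubes), so `‖S - S_k‖_F²` is the sum of `‖s_j‖_F²` over `j ≥ k`, and the tubes with `j ≥ r` vanish.
-/

-- The Kronecker product `M_p ⊗ ⋯ ⊗ M₃`, indexed by trailing multi-indices.
def kronPi {R : Type*} [CommMonoid R] (P : ∀ k, Matrix (Fin (m k)) (Fin (m k)) R) :
    Matrix (TI m) (TI m) R :=
  Matrix.of fun i j => ∏ k, P k (i k) (j k)

section kronPi

variable {R : Type*} [CommSemiring R]

theorem kronPi_mul (P Q : ∀ k, Matrix (Fin (m k)) (Fin (m k)) R) :
    kronPi P * kronPi Q = kronPi fun k => P k * Q k := by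
  ext i l
  simp only [kronPi, mul_apply, of_apply, ← Finset.prod_mul_distrib]
  exact (Fintype.prod_sum fun k x => P k (i k) x * Q k x (l k)).symm

theorem kronPi_one : kronPi (fun k => (1 : Matrix (Fin (m k)) (Fin (m k)) R)) = 1 := by
  ext i l
  by_cases h : i = l
  · subst h
    simp [kronPi]
  · obtain ⟨k, hk⟩ := Function.ne_iff.mp h
    simp only [kronPi, of_apply, one_apply_ne h]
    exact Finset.prod_eq_zero (Finset.mem_univ k) (one_apply_ne hk)

theorem kronPi_transpose (P : ∀ k, Matrix (Fin (m k)) (Fin (m k)) R) :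
    (kronPi P)ᵀ = kronPi fun k => (P k)ᵀ := rfl

theorem kronPi_smul (c : Fin q → R) (P : ∀ k, Matrix (Fin (m k)) (Fin (m k)) R) :
    kronPi (fun k => c k • P k) = (∏ k, c k) • kronPi P := by
  ext i l
  simp [kronPi, Finset.prod_mul_distrib]

end kronPi

theorem hat_apply (M : ∀ k, Matrix (Fin (m k)) (Fin (m k)) ℝ) {a b : Type}
    (A : TI m → Matrix a b ℝ) (i : TI m) (r : a) (c : b) :
    hat M A i r c = (kronPi M *ᵥ fun j => A j r c) i := by
  simp [hat, kronPi, mulVec, dotProduct, Matrix.sum_apply]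

theorem unhat_eq_hat (M : ∀ k, Matrix (Fin (m k)) (Fin (m k)) ℝ) {a b : Type}
    (A : TI m → Matrix a b ℝ) : unhat M A = hat (fun k => (M k)⁻¹) A := rfl

theorem hat_hat (P Q : ∀ k, Matrix (Fin (m k)) (Fin (m k)) ℝ) {a b : Type}
    (A : TI m → Matrix a b ℝ) : hat P (hat Q A) = hat (fun k => P k * Q k) A := by
  funext i; ext r c
  simp only [hat_apply, ← kronPi_mul, ← mulVec_mulVec]

theorem hat_one {a b : Type} (A : TI m → Matrix a b ℝ) :
    hat (fun k => (1 : Matrix (Fin (m k)) (Fin (m k)) ℝ)) A = A := by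
  funext i; ext r c
  rw [hat_apply, kronPi_one, one_mulVec]

theorem hat_unhat {M : ∀ k, Matrix (Fin (m k)) (Fin (m k)) ℝ} (hM : ∀ k, IsUnit (M k).det)
    {a b : Type} (A : TI m → Matrix a b ℝ) : hat M (unhat M A) = A := by
  simp [unhat_eq_hat, hat_hat, mul_nonsing_inv _ (hM _), hat_one]

theorem unhat_hat {M : ∀ k, Matrix (Fin (m k)) (Fin (m k)) ℝ} (hM : ∀ k, IsUnit (M k).det)
    {a b : Type} (A : TI m → Matrix a b ℝ) : unhat M (hat M A) = A := by
  simp [unhat_eq_hat, hat_hat, nonsing_inv_mul _ (hM _), hat_one]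

theorem hat_starM {M : ∀ k, Matrix (Fin (m k)) (Fin (m k)) ℝ} (hM : ∀ k, IsUnit (M k).det)
    {a b c : Type} [Fintype b] (A : TI m → Matrix a b ℝ) (B : TI m → Matrix b c ℝ) :
    hat M (starM M A B) = fun i => hat M A i * hat M B i :=
  hat_unhat hM _

theorem hat_transM {M : ∀ k, Matrix (Fin (m k)) (Fin (m k)) ℝ} (hM : ∀ k, IsUnit (M k).det)
    {a b : Type} (A : TI m → Matrix a b ℝ) : hat M (transM M A) = fun i => (hat M A i)ᵀ :=
  hat_unhat hM _

theorem hat_idM {M : ∀ k, Matrix (Fin (m k)) (Fin (m k)) ℝ} (hM : ∀ k, IsUnit (M k).det)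
    (a : Type) [DecidableEq a] : hat M (idM M a) = fun _ => 1 :=
  hat_unhat hM _

theorem hat_sub (M : ∀ k, Matrix (Fin (m k)) (Fin (m k)) ℝ) {a b : Type}
    (A B : TI m → Matrix a b ℝ) : hat M (A - B) = hat M A - hat M B := by
  funext i; ext r c
  simp [hat, smul_sub, Finset.sum_sub_distrib]

theorem hat_submatrix (M : ∀ k, Matrix (Fin (m k)) (Fin (m k)) ℝ) {a b a' b' : Type}
    (A : TI m → Matrix a b ℝ) (f : a' → a) (g : b' → b) :
    hat M (fun i => (A i).submatrix f g) = fun i => (hat M A i).submatrix f g := by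
  funext i; ext r c
  simp [hat_apply]

def leadingBlock {α : Type*} [Zero α] (k : ℕ) {n₁ n₂ : ℕ} (X : Matrix (Fin n₁) (Fin n₂) α) :
    Matrix (Fin n₁) (Fin n₂) α :=
  Matrix.of fun a b => if (a : ℕ) < k ∧ (b : ℕ) < k then X a b else 0

theorem hat_leadingBlock (M : ∀ k, Matrix (Fin (m k)) (Fin (m k)) ℝ) (k : ℕ) {n₁ n₂ : ℕ}
    (A : TI m → Matrix (Fin n₁) (Fin n₂) ℝ) :
    hat M (fun i => leadingBlock k (A i)) = fun i => leadingBlock k (hat M A i) := by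
  funext i; ext r c
  by_cases h : (r : ℕ) < k ∧ (c : ℕ) < k <;> simp [hat_apply, leadingBlock, h, ← Pi.zero_def]

theorem sum_castLE_eq_sum_ite {β : Type*} [AddCommMonoid β] {n k : ℕ} (h : k ≤ n)
    (f : Fin n → β) :
    ∑ a : Fin k, f (Fin.castLE h a) = ∑ j : Fin n, if (j : ℕ) < k then f j else 0 := by
  refine Fintype.sum_of_injective _ (Fin.castLE_injective h) _ _ (fun j hj => ?_) (fun a => ?_)
  · exact if_neg fun hjk => hj ⟨⟨j, hjk⟩, rfl⟩
  · simp

theorem submatrix_castLE_mul_mul_transpose {R : Type*} [Semiring R] {α β : Type*}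
    {n₁ n₂ k : ℕ} (h₁ : k ≤ n₁) (h₂ : k ≤ n₂) (U : Matrix α (Fin n₁) R)
    (X : Matrix (Fin n₁) (Fin n₂) R) (V : Matrix β (Fin n₂) R) :
    U.submatrix id (Fin.castLE h₁) * X.submatrix (Fin.castLE h₁) (Fin.castLE h₂) *
        (V.submatrix id (Fin.castLE h₂))ᵀ = U * leadingBlock k X * Vᵀ := by
  ext r c
  simp only [mul_apply, submatrix_apply, transpose_apply, id]
  rw [sum_castLE_eq_sum_ite h₂
    fun b => (∑ a : Fin k, U r (Fin.castLE h₁ a) * X (Fin.castLE h₁ a) b) * V c b]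
  refine Finset.sum_congr rfl fun b _ => ?_
  rw [sum_castLE_eq_sum_ite h₁ fun a => U r a * X a b]
  by_cases hb : (b : ℕ) < k <;> simp [leadingBlock, hb, mul_ite]

theorem sum_sq_mulVec_of_transpose_mul_eq_smul {ι R : Type*} [Fintype ι] [DecidableEq ι]
    [CommSemiring R]
    {K : Matrix ι ι R} {C : R} (hK : Kᵀ * K = C • 1) (v : ι → R) :
    ∑ i, (K *ᵥ v) i ^ 2 = C * ∑ i, v i ^ 2 := by
  have hdot : ∀ w : ι → R, ∑ i, w i ^ 2 = w ⬝ᵥ w := fun w => by simp [dotProduct, sq]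
  rw [hdot, hdot, dotProduct_mulVec, ← mulVec_transpose, mulVec_mulVec, hK, smul_mulVec,
    one_mulVec, smul_dotProduct, smul_eq_mul]

theorem transpose_kronPi_mul_kronPi {M : ∀ k, Matrix (Fin (m k)) (Fin (m k)) ℝ} {c : Fin q → ℝ}
    (hM : ∀ k, (M k)ᵀ * M k = c k ^ 2 • 1) :
    (kronPi M)ᵀ * kronPi M = (∏ k, c k ^ 2) • 1 := by
  simp only [kronPi_transpose, kronPi_mul, hM, kronPi_smul, kronPi_one]

theorem frob_sq {a b : Type} [Fintype a] [Fintype b] (A : TI m → Matrix a b ℝ) :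
    frob A ^ 2 = ∑ i, ∑ r, ∑ c, A i r c ^ 2 :=
  Real.sq_sqrt (by positivity)

theorem frob_hat_sq {M : ∀ k, Matrix (Fin (m k)) (Fin (m k)) ℝ} {c : Fin q → ℝ}
    (hM : ∀ k, (M k)ᵀ * M k = c k ^ 2 • 1) {a b : Type} [Fintype a] [Fintype b]
    (A : TI m → Matrix a b ℝ) :
    frob (hat M A) ^ 2 = (∏ k, c k ^ 2) * frob A ^ 2 := by
  have hswap : ∀ B : TI m → Matrix a b ℝ,
      ∑ i, ∑ r, ∑ c, B i r c ^ 2 = ∑ r, ∑ c, ∑ i, B i r c ^ 2 := fun B => by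
    rw [Finset.sum_comm]
    exact Finset.sum_congr rfl fun r _ => Finset.sum_comm
  rw [frob_sq, frob_sq, hswap, hswap]
  simp only [hat_apply, Finset.mul_sum,
    sum_sq_mulVec_of_transpose_mul_eq_smul (transpose_kronPi_mul_kronPi hM)]

theorem sum_sq_eq_trace_mul_transpose {R a b : Type*} [CommSemiring R] [Fintype a] [Fintype b]
    (X : Matrix a b R) : ∑ r, ∑ c, X r c ^ 2 = trace (X * Xᵀ) := by
  simp [trace, mul_apply, sq]

theorem sum_sq_mul_mul_transpose {R a b : Type*} [CommSemiring R] [Fintype a] [Fintype b]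
    [DecidableEq a] [DecidableEq b] {P : Matrix a a R} {Q : Matrix b b R} (hP : Pᵀ * P = 1)
    (hQ : Qᵀ * Q = 1) (X : Matrix a b R) :
    ∑ r, ∑ c, (P * X * Qᵀ) r c ^ 2 = ∑ r, ∑ c, X r c ^ 2 := by
  simp only [sum_sq_eq_trace_mul_transpose, transpose_mul, transpose_transpose]
  calc trace (P * X * Qᵀ * (Q * (Xᵀ * Pᵀ)))
      = trace (P * (X * (Qᵀ * Q) * Xᵀ) * Pᵀ) := by simp only [Matrix.mul_assoc]
    _ = trace (Pᵀ * P * (X * (Qᵀ * Q) * Xᵀ)) := by rw [trace_mul_comm, Matrix.mul_assoc Pᵀ]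
    _ = trace (X * Xᵀ) := by rw [hP, hQ, Matrix.one_mul, Matrix.mul_one]

theorem frob_mul_mul_transpose {a b : Type} [Fintype a] [Fintype b] [DecidableEq a]
    [DecidableEq b] {P : TI m → Matrix a a ℝ} {Q : TI m → Matrix b b ℝ}
    (hP : ∀ i, (P i)ᵀ * P i = 1) (hQ : ∀ i, (Q i)ᵀ * Q i = 1) (X : TI m → Matrix a b ℝ) :
    frob (fun i => P i * X i * (Q i)ᵀ) = frob X := by
  simp only [frob, sum_sq_mul_mul_transpose (hP _) (hQ _)]

theorem isUnit_det_of_transpose_mul_eq_smul {K n : Type*} [Field K] [Fintype n] [DecidableEq n]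
    {P : Matrix n n K} {C : K} (hP : Pᵀ * P = C • 1) (hC : C ≠ 0) : IsUnit P.det :=
  isUnit_det_of_left_inverse (B := C⁻¹ • Pᵀ) <| by
    rw [Matrix.smul_mul, hP, smul_smul, inv_mul_cancel₀ hC, one_smul]

theorem frob_sq_eq_of_frob_hat_eq {M : ∀ k, Matrix (Fin (m k)) (Fin (m k)) ℝ} {c : Fin q → ℝ}
    (hM : ∀ k, (M k)ᵀ * M k = c k ^ 2 • 1) (hc : ∀ k, c k ≠ 0) {a b : Type} [Fintype a]
    [Fintype b] {X Y : TI m → Matrix a b ℝ} (h : frob (hat M X) = frob (hat M Y)) :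
    frob X ^ 2 = frob Y ^ 2 := by
  have hC : ∏ k, c k ^ 2 ≠ 0 := Finset.prod_ne_zero_iff.mpr fun k _ => pow_ne_zero 2 (hc k)
  have := congrArg (· ^ 2) h
  simp only [frob_hat_sq hM] at this
  exact mul_left_cancel₀ hC this

theorem IsStarMOrthogonal.transpose_hat_mul_hat {M : ∀ k, Matrix (Fin (m k)) (Fin (m k)) ℝ}
    (hM : ∀ k, IsUnit (M k).det) {a : Type} [Fintype a] [DecidableEq a]
    {Q : TI m → Matrix a a ℝ} (hQ : IsStarMOrthogonal M Q) (i : TI m) :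
    (hat M Q i)ᵀ * hat M Q i = 1 := by
  simpa [hat_starM hM, hat_transM hM, hat_idM hM] using congrFun (congrArg (hat M) hQ.1) i

theorem truncCols_eq_submatrix {n k : ℕ} (hk : k ≤ n) {a : Type} (U : TI m → Matrix a (Fin n) ℝ) :
    truncCols hk U = fun i => (U i).submatrix id (Fin.castLE hk) := rfl

theorem truncBlock_eq_submatrix {n₁ n₂ k : ℕ} (h₁ : k ≤ n₁) (h₂ : k ≤ n₂)
    (S : TI m → Matrix (Fin n₁) (Fin n₂) ℝ) :
    truncBlock h₁ h₂ S = fun i => (S i).submatrix (Fin.castLE h₁) (Fin.castLE h₂) := rfl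

theorem hat_truncApprox {M : ∀ k, Matrix (Fin (m k)) (Fin (m k)) ℝ} (hM : ∀ k, IsUnit (M k).det)
    {n₁ n₂ : ℕ} (U : TI m → Matrix (Fin n₁) (Fin n₁) ℝ) (S : TI m → Matrix (Fin n₁) (Fin n₂) ℝ)
    (V : TI m → Matrix (Fin n₂) (Fin n₂) ℝ) (k : ℕ) (hk : k ≤ min n₁ n₂) (i : TI m) :
    hat M (truncApprox M U S V k hk) i =
      hat M U i * leadingBlock k (hat M S i) * (hat M V i)ᵀ := by
  simp only [truncApprox, truncCols_eq_submatrix, truncBlock_eq_submatrix, hat_submatrix,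
    hat_starM hM, hat_transM hM]
  exact submatrix_castLE_mul_mul_transpose _ _ _ _ _

namespace IsTSVDM

variable {M : ∀ k, Matrix (Fin (m k)) (Fin (m k)) ℝ} {n₁ n₂ : ℕ}
  {A : TI m → Matrix (Fin n₁) (Fin n₂) ℝ} {U : TI m → Matrix (Fin n₁) (Fin n₁) ℝ}
  {S : TI m → Matrix (Fin n₁) (Fin n₂) ℝ} {V : TI m → Matrix (Fin n₂) (Fin n₂) ℝ}

theorem hat_eq (hSVD : IsTSVDM M A U S V) (hM : ∀ k, IsUnit (M k).det) (i : TI m) :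
    hat M A i = hat M U i * hat M S i * (hat M V i)ᵀ := by
  rw [hSVD.decomp, hat_starM hM, hat_starM hM, hat_transM hM]

theorem apply_eq_zero_of_ne (hSVD : IsTSVDM M A U S V) (hM : ∀ k, IsUnit (M k).det) (i : TI m)
    {a : Fin n₁} {b : Fin n₂} (hab : (a : ℕ) ≠ b) : S i a b = 0 := by
  rw [← unhat_hat hM S, unhat_eq_hat, hat_apply]
  simp [hSVD.fdiag _ a b hab, ← Pi.zero_def]

theorem frob_sq_sub_truncApprox (hSVD : IsTSVDM M A U S V) {c : Fin q → ℝ}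
    (hM : ∀ k, (M k)ᵀ * M k = c k ^ 2 • 1) (hc : ∀ k, c k ≠ 0) (k : ℕ) (hk : k ≤ min n₁ n₂) :
    frob (A - truncApprox M U S V k hk) ^ 2 = frob (S - fun i => leadingBlock k (S i)) ^ 2 := by
  have hdet (k) : IsUnit (M k).det :=
    isUnit_det_of_transpose_mul_eq_smul (hM k) (pow_ne_zero 2 (hc k))
  refine frob_sq_eq_of_frob_hat_eq hM hc ?_
  have hslices : hat M (A - truncApprox M U S V k hk) =
      fun i => hat M U i * hat M (S - fun i => leadingBlock k (S i)) i * (hat M V i)ᵀ := by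
    funext i
    rw [hat_sub, hat_sub, hat_leadingBlock]
    simp only [Pi.sub_apply, hSVD.hat_eq hdet, hat_truncApprox hdet, Matrix.mul_sub,
      Matrix.sub_mul]
  rw [hslices, frob_mul_mul_transpose (hSVD.orthU.transpose_hat_mul_hat hdet)
    (hSVD.orthV.transpose_hat_mul_hat hdet)]

end IsTSVDM

theorem sum_sum_eq_sum_diag {β : Type*} [AddCommMonoid β] {n₁ n₂ : ℕ} (g : Fin n₁ → Fin n₂ → β)
    (hg : ∀ (a : Fin n₁) (b : Fin n₂), (a : ℕ) ≠ b → g a b = 0) :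
    ∑ a, ∑ b, g a b = ∑ j : Fin (min n₁ n₂), g (dIdx₁ j) (dIdx₂ j) := by
  rw [← Fintype.sum_prod_type']
  refine (Fintype.sum_of_injective (fun j => (dIdx₁ j, dIdx₂ j)) (fun j j' h => ?_) _ _
    (fun p hp => ?_) fun j => rfl).symm
  · exact Fin.ext (congrArg (fun p : Fin n₁ × Fin n₂ => (p.1 : ℕ)) h)
  · refine hg _ _ fun (hp' : (p.1 : ℕ) = p.2) => hp ⟨⟨p.1, lt_min p.1.2 (hp' ▸ p.2.2)⟩, ?_⟩
    exact Prod.ext rfl (Fin.ext hp')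

theorem tubeNorm_sq {n₁ n₂ : ℕ} (S : TI m → Matrix (Fin n₁) (Fin n₂) ℝ) (j : Fin (min n₁ n₂)) :
    tubeNorm S j ^ 2 = ∑ i, tube S j i ^ 2 :=
  Real.sq_sqrt (by positivity)

theorem frob_sq_sub_leadingBlock {n₁ n₂ : ℕ} {S : TI m → Matrix (Fin n₁) (Fin n₂) ℝ}
    (hS : ∀ i (a : Fin n₁) (b : Fin n₂), (a : ℕ) ≠ b → S i a b = 0) (k : ℕ) :
    frob (S - fun i => leadingBlock k (S i)) ^ 2 =
      ∑ j ∈ Finset.univ.filter (fun j : Fin (min n₁ n₂) => k ≤ (j : ℕ)), tubeNorm S j ^ 2 := by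
  have hslice (i : TI m) : ∑ a, ∑ b, (S - fun i => leadingBlock k (S i)) i a b ^ 2 =
      ∑ j ∈ Finset.univ.filter (fun j : Fin (min n₁ n₂) => k ≤ (j : ℕ)), tube S j i ^ 2 := by
    rw [sum_sum_eq_sum_diag _ fun a b hab => by simp [leadingBlock, hS i a b hab],
      Finset.sum_filter]
    refine Finset.sum_congr rfl fun j _ => ?_
    rcases le_or_gt k j with hj | hj
    · simp [leadingBlock, tube, dIdx₁, dIdx₂, hj, hj.not_gt]
    · simp [leadingBlock, dIdx₁, dIdx₂, hj, hj.not_ge]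
  simp only [frob_sq, hslice, tubeNorm_sq]
  exact Finset.sum_comm

theorem HasTRank.sum_tubeNorm_sq_filter_and_lt {n₁ n₂ : ℕ}
    {S : TI m → Matrix (Fin n₁) (Fin n₂) ℝ} {r : ℕ} (hr : HasTRank S r) (k : ℕ) :
    ∑ j ∈ Finset.univ.filter (fun j : Fin (min n₁ n₂) => k ≤ (j : ℕ) ∧ (j : ℕ) < r),
        tubeNorm S j ^ 2 =
      ∑ j ∈ Finset.univ.filter (fun j : Fin (min n₁ n₂) => k ≤ (j : ℕ)), tubeNorm S j ^ 2 := by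
  rw [← Finset.filter_filter]
  refine Finset.sum_filter_of_ne fun j _ hj => (hr j).mpr fun h0 => hj ?_
  simp [tubeNorm, h0]

/-- (Eckart–Young for the higher-order `⋆M`-product: error formula.)
`‖A − A_k‖_F² = Σ_{i=k+1}^{r} ‖s_i‖_F²`, where `A_k` is the t-rank-`k` truncation. -/
theorem truncApprox_error_formula {q : ℕ} {m : Fin q → ℕ}
    (M : ∀ k, Matrix (Fin (m k)) (Fin (m k)) ℝ)
    (c : Fin q → ℝ) (W : ∀ k, Matrix (Fin (m k)) (Fin (m k)) ℝ)
    (hc : ∀ k, c k ≠ 0)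
    (hW : ∀ k, W k * (W k)ᵀ = 1 ∧ (W k)ᵀ * W k = 1)
    (hM : ∀ k, M k = c k • W k)
    {n₁ n₂ : ℕ} (A : TI m → Matrix (Fin n₁) (Fin n₂) ℝ)
    (U : TI m → Matrix (Fin n₁) (Fin n₁) ℝ)
    (S : TI m → Matrix (Fin n₁) (Fin n₂) ℝ)
    (V : TI m → Matrix (Fin n₂) (Fin n₂) ℝ)
    (hSVD : IsTSVDM M A U S V) (r : ℕ) (hr : HasTRank S r)
    (k : ℕ) (hk : k ≤ min n₁ n₂) :
    frob (A - truncApprox M U S V k hk) ^ 2 =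
      ∑ j ∈ Finset.univ.filter (fun j : Fin (min n₁ n₂) => k ≤ (j : ℕ) ∧ (j : ℕ) < r),
        tubeNorm S j ^ 2 := by
  have hMTM (k) : (M k)ᵀ * M k = c k ^ 2 • 1 := by
    rw [hM k, transpose_smul, Matrix.smul_mul, Matrix.mul_smul, (hW k).2, smul_smul, sq]
  have hdet (k) : IsUnit (M k).det :=
    isUnit_det_of_transpose_mul_eq_smul (hMTM k) (pow_ne_zero 2 (hc k))
  rw [hSVD.frob_sq_sub_truncApprox hMTM hc,
    frob_sq_sub_leadingBlock (fun i _ _ => hSVD.apply_eq_zero_of_ne hdet i),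
    hr.sum_tubeNorm_sq_filter_and_lt]

end TSVDM
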